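/- There exists a nondecreasing continuous function f : [0,7] → [0,7] that is not absolutely continuous but whose minimal modulus of continuity ω_f : [0,7] → ℝ is absolutely continuous. -/

import Mathlib

noncomputable def modCont (f : ℝ → ℝ) (a b : ℝ) (δ : ℝ) : ℝ :=
  sSup {d : ℝ | ∃ x ∈ Set.Icc a b, ∃ y ∈ Set.Icc a b, |x - y| ≤ δ ∧ d = |f x - f y|}

def AbsolutelyContinuousOn (g : ℝ → ℝ) (a b : ℝ) : Prop :=
  ∀ ε > (0:ℝ), ∃ δ > (0:ℝ), ∀ n : ℕ, ∀ x y : ℕ → ℝ,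
    (∀ i < n, a ≤ x i ∧ x i ≤ y i ∧ y i ≤ b) →
    (∀ i < n, ∀ j < n, i ≠ j → Disjoint (Set.Ioo (x i) (y i)) (Set.Ioo (x j) (y j))) →
    (∑ i ∈ Finset.range n, (y i - x i)) < δ →
    (∑ i ∈ Finset.range n, |g (y i) - g (x i)|) < ε

/-- The standard Cantor function is the unique monotone function on `[0,1]` with
`c 0 = 0`, `c 1 = 1`, satisfying the self-similarity relations
`c (x/3) = c x / 2` and `c ((x+2)/3) = (1 + c x)/2`. -/
def IsCantorFunction (c : ℝ → ℝ) : Prop :=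
  MonotoneOn c (Set.Icc 0 1) ∧ c 0 = 0 ∧ c 1 = 1 ∧
  (∀ x ∈ Set.Icc (0:ℝ) 1, c (x / 3) = c x / 2) ∧
  (∀ x ∈ Set.Icc (0:ℝ) 1, c ((x + 2) / 3) = (1 + c x) / 2)

noncomputable def cantorAlpha : ℝ := Real.log 2 / Real.log 3


namespace Stmt10Aux

open Real Set
open scoped NNReal

local notation "α" => cantorAlpha

lemma alpha_pos : 0 < cantorAlpha :=
  div_pos (Real.log_pos (by norm_num)) (Real.log_pos (by norm_num))

lemma alpha_lt_one : cantorAlpha < 1 := by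
  rw [cantorAlpha, div_lt_one (Real.log_pos (by norm_num))]
  exact Real.log_lt_log (by norm_num) (by norm_num)

lemma alpha_gt_quarter : 1/4 < cantorAlpha := by
  rw [cantorAlpha, lt_div_iff₀ (Real.log_pos (by norm_num))]
  have h16 : Real.log 3 < Real.log 16 := Real.log_lt_log (by norm_num) (by norm_num)
  have : Real.log 16 = 4 * Real.log 2 := by
    have : (16:ℝ) = 2 ^ (4:ℕ) := by norm_num
    rw [this, Real.log_pow]; push_cast; ring
  nlinarith [h16, this]

lemma three_rpow : (3:ℝ) ^ cantorAlpha = 2 := by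
  rw [cantorAlpha, Real.rpow_def_of_pos (by norm_num : (0:ℝ) < 3)]
  rw [mul_comm, div_mul_cancel₀ _ (ne_of_gt (Real.log_pos (by norm_num)))]
  exact Real.exp_log (by norm_num)

/-- subadditivity of `x ^ α` -/
lemma rpow_subadd {a b : ℝ} (ha : 0 ≤ a) (hb : 0 ≤ b) :
    (a + b) ^ α ≤ a ^ α + b ^ α := by
  have h := NNReal.rpow_add_le_add_rpow (a.toNNReal) (b.toNNReal)
    alpha_pos.le alpha_lt_one.le
  have hcoe : ((a.toNNReal + b.toNNReal : ℝ≥0) : ℝ) = a + b := by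
    simp [Real.coe_toNNReal _ ha, Real.coe_toNNReal _ hb]
  have := (NNReal.coe_le_coe).2 h
  rw [NNReal.coe_add] at this
  simpa [NNReal.coe_rpow, hcoe, NNReal.coe_add,
    Real.coe_toNNReal _ ha, Real.coe_toNNReal _ hb] using this

/-- tangent line at 1: `t ^ α ≤ α * t + (1 - α)` -/
lemma rpow_tangent {t : ℝ} (ht : 0 ≤ t) : t ^ α ≤ α * t + (1 - α) := by
  have := Real.geom_mean_le_arith_mean2_weighted alpha_pos.le
    (by linarith [alpha_lt_one] : (0:ℝ) ≤ 1 - α) ht zero_le_one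
    (by ring)
  simpa using this

/-- concavity midpoint inequality -/
lemma rpow_midpoint {a b : ℝ} (ha : 0 ≤ a) (hb : 0 ≤ b) :
    a ^ α + b ^ α ≤ 2 * ((a + b)/2) ^ α := by
  have hc := (Real.concaveOn_rpow alpha_pos.le alpha_lt_one.le).2
    (Set.mem_Ici.2 ha) (Set.mem_Ici.2 hb)
    (by norm_num : (0:ℝ) ≤ 1/2) (by norm_num : (0:ℝ) ≤ 1/2) (by norm_num)
  have : (1/2 : ℝ) • a + (1/2 : ℝ) • b = (a+b)/2 := by simp [smul_eq_mul]; ring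
  rw [this] at hc
  simp only [smul_eq_mul] at hc
  linarith

lemma self_le_rpow {h : ℝ} (h0 : 0 ≤ h) (h1 : h ≤ 1) : h ≤ h ^ α := by
  rcases eq_or_lt_of_le h0 with rfl | hp
  · rw [Real.zero_rpow (ne_of_gt alpha_pos)]
  · calc h = h ^ (1:ℝ) := (Real.rpow_one h).symm
    _ ≤ h ^ α := Real.rpow_le_rpow_of_exponent_ge hp h1 alpha_lt_one.le

lemma rpow_le_one' {h : ℝ} (h0 : 0 ≤ h) (h1 : h ≤ 1) : h ^ α ≤ 1 :=
  Real.rpow_le_one h0 h1 alpha_pos.le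

lemma one_le_rpow' {h : ℝ} (h1 : 1 ≤ h) : 1 ≤ h ^ α :=
  Real.one_le_rpow h1 alpha_pos.le

/-- `w ^ α ≤ 3/4 + w/4` for `w ∈ [0,1]`. -/
lemma rpow_quarter {w : ℝ} (h0 : 0 ≤ w) (h1 : w ≤ 1) : w ^ α ≤ 3/4 + w/4 := by
  have := rpow_tangent h0
  nlinarith [alpha_gt_quarter, alpha_lt_one]

/-- `v^α - u^α ≥ α (v - u)` for `0 ≤ u ≤ v ≤ 1`. -/
lemma rpow_diff_ge {u v : ℝ} (hu : 0 ≤ u) (huv : u ≤ v) (hv : v ≤ 1) :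
    α * (v - u) ≤ v ^ α - u ^ α := by
  rcases eq_or_lt_of_le (hu.trans huv) with rfl | hvpos
  · have : u = 0 := le_antisymm (by linarith) hu
    simp [this]
  · have hg := Real.geom_mean_le_arith_mean2_weighted alpha_pos.le
      (by linarith [alpha_lt_one] : (0:ℝ) ≤ 1 - α) hu (le_of_lt hvpos) (by ring)
    have hv1 : v ^ (1 - α) ≤ 1 :=
      Real.rpow_le_one (le_of_lt hvpos) hv (by linarith [alpha_lt_one])
    have hvv : v ^ α * v ^ (1-α) = v := by
      rw [← Real.rpow_add hvpos]; simp
    have hvpow : 0 < v ^ (1 - α) := Real.rpow_pos_of_pos hvpos _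
    have key : (α * (v - u) + u ^ α) * v ^ (1-α) ≤ v ^ α * v ^ (1-α) := by
      rw [hvv]
      have h2 : α * (v - u) * v ^ (1-α) ≤ α * (v - u) := by
        have h3 : 0 ≤ α * (v - u) := by
          have := alpha_pos; nlinarith
        nlinarith [hv1]
      have hsimp : (α * (v - u) + u ^ α) * v ^ (1-α)
          = α * (v - u) * v ^ (1-α) + u ^ α * v ^ (1-α) := by ring
      rw [hsimp]
      nlinarith [hg]
    have := le_of_mul_le_mul_right key hvpow
    linarith

/-- tangent above at `u`: `v^α - u^α ≤ α * (u^α/u) * (v - u)` for `0 < u ≤ v`. -/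
lemma rpow_diff_le {u v : ℝ} (hu : 0 < u) (huv : u ≤ v) :
    v ^ α - u ^ α ≤ α * (u ^ α / u) * (v - u) := by
  have hg := Real.geom_mean_le_arith_mean2_weighted alpha_pos.le
    (by linarith [alpha_lt_one] : (0:ℝ) ≤ 1 - α) (hu.le.trans huv) hu.le (by ring)
  have huu : u ^ α * u ^ (1-α) = u := by rw [← Real.rpow_add hu]; simp
  have hupow : 0 < u ^ (1 - α) := Real.rpow_pos_of_pos hu _
  have hua : 0 < u ^ α := Real.rpow_pos_of_pos hu _
  -- multiply goal by u^(1-α) > 0 :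
  -- (v^α - u^α) u^(1-α) ≤ α v + (1-α) u - u = α (v - u)
  have key : (v ^ α - u ^ α) * u ^ (1-α) ≤ α * (v - u) := by
    have expand : (v ^ α - u ^ α) * u ^ (1-α)
        = v ^ α * u ^ (1-α) - u ^ α * u ^ (1-α) := by ring
    rw [expand, huu]
    nlinarith [hg]
  -- now α * (u^α/u) * (v - u) = α (v-u) * u^α/u and u = u^α u^(1-α)
  rw [← sub_nonneg]
  have hrw : α * (u ^ α / u) * (v - u) - (v ^ α - u ^ α)
      = (α * (v - u) - (v ^ α - u ^ α) * u ^ (1-α)) * (u ^ α / u) +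
        (v ^ α - u ^ α) * ((u ^ α / u) * u ^ (1 - α) - 1) := by
    ring
  have hone : (u ^ α / u) * u ^ (1 - α) = 1 := by
    rw [div_mul_eq_mul_div, huu, div_self (ne_of_gt hu)]
  rw [hrw, hone]
  have : 0 ≤ (α * (v - u) - (v ^ α - u ^ α) * u ^ (1-α)) * (u ^ α / u) := by
    apply mul_nonneg (by linarith [key]) (by positivity)
  linarith

/-! ### Cantor function approximants -/

noncomputable def cseq : ℕ → ℝ → ℝ
  | 0, x => max 0 (min x 1)
  | (n+1), x => (cseq n (min (3*x) 1) + cseq n (max (3*x - 2) 0)) / 2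

lemma cseq_mono (n : ℕ) : Monotone (cseq n) := by
  induction n with
  | zero =>
    intro x y hxy
    exact max_le_max le_rfl (min_le_min hxy le_rfl)
  | succ n ih =>
    intro x y hxy
    simp only [cseq]
    have h1 : min (3*x) 1 ≤ min (3*y) 1 := min_le_min (by linarith) le_rfl
    have h2 : max (3*x - 2) 0 ≤ max (3*y - 2) 0 := max_le_max (by linarith) le_rfl
    have := ih h1
    have := ih h2
    linarith

lemma cseq_nonneg (n : ℕ) (x : ℝ) : 0 ≤ cseq n x := by
  induction n generalizing x with
  | zero => exact le_max_left _ _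
  | succ n ih =>
    simp only [cseq]
    have := ih (min (3*x) 1)
    have := ih (max (3*x - 2) 0)
    linarith

lemma cseq_le_one (n : ℕ) (x : ℝ) : cseq n x ≤ 1 := by
  induction n generalizing x with
  | zero =>
    simp only [cseq]
    exact max_le (by norm_num) (min_le_right _ _)
  | succ n ih =>
    simp only [cseq]
    have := ih (min (3*x) 1)
    have := ih (max (3*x - 2) 0)
    linarith

lemma cseq_of_nonpos (n : ℕ) {x : ℝ} (hx : x ≤ 0) : cseq n x = 0 := by
  induction n generalizing x with
  | zero =>
    simp only [cseq]
    rw [max_eq_left]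
    exact min_le_of_left_le hx
  | succ n ih =>
    simp only [cseq]
    rw [ih (le_trans (min_le_left _ _) (by linarith) : min (3*x) 1 ≤ 0),
        ih (max_le (by linarith) le_rfl : max (3*x - 2) 0 ≤ 0)]
    norm_num

lemma cseq_of_one_le (n : ℕ) {x : ℝ} (hx : 1 ≤ x) : cseq n x = 1 := by
  induction n generalizing x with
  | zero =>
    simp only [cseq]
    rw [min_eq_right hx, max_eq_right (by norm_num : (0:ℝ) ≤ 1)]
  | succ n ih =>
    simp only [cseq]
    rw [ih (le_min (by linarith) le_rfl : (1:ℝ) ≤ min (3*x) 1),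
        ih (le_trans (by linarith) (le_max_left _ _) : (1:ℝ) ≤ max (3*x - 2) 0)]
    norm_num

lemma cseq_zero_eval (n : ℕ) : cseq n 0 = 0 := cseq_of_nonpos n le_rfl
lemma cseq_one_eval (n : ℕ) : cseq n 1 = 1 := cseq_of_one_le n le_rfl

/-- `x/2 ≤ cseq n x` for `x ≤ 1`. -/
lemma cseq_half (n : ℕ) {x : ℝ} (hx : x ≤ 1) : x / 2 ≤ cseq n x := by
  rcases le_or_gt x 0 with h0 | h0
  · rw [cseq_of_nonpos n h0]; linarith
  induction n generalizing x with
  | zero =>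
    simp only [cseq]
    rw [min_eq_left hx, max_eq_right h0.le]
    linarith
  | succ n ih =>
    simp only [cseq]
    rcases le_or_gt x (1/3) with h13 | h13
    · -- lower third
      have hmin : min (3*x) 1 = 3*x := min_eq_left (by linarith)
      have hmax : max (3*x - 2) 0 = 0 := max_eq_right (by linarith)
      rw [hmin, hmax, cseq_zero_eval]
      rcases le_or_gt (3*x) 0 with h' | h'
      · linarith
      · have := ih (by linarith : 3*x ≤ 1) h'
        linarith
    · rcases le_or_gt x (2/3) with h23 | h23
      · -- middle third : value 1/2
        have hmin : min (3*x) 1 = 1 := min_eq_right (by linarith)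
        have hmax : max (3*x - 2) 0 = 0 := max_eq_right (by linarith)
        rw [hmin, hmax, cseq_one_eval, cseq_zero_eval]
        linarith
      · -- upper third
        have hmin : min (3*x) 1 = 1 := min_eq_right (by linarith)
        have hmax : max (3*x - 2) 0 = 3*x - 2 := max_eq_left (by linarith)
        rw [hmin, hmax, cseq_one_eval]
        have := ih (by linarith : 3*x - 2 ≤ 1) (by linarith)
        linarith

/-- Hölder continuity with sharp constant. -/
lemma cseq_holder (n : ℕ) : ∀ {x y : ℝ}, x ≤ y → cseq n y - cseq n x ≤ (y - x) ^ α := by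
  induction n with
  | zero =>
    intro x y hxy
    have hmin : min y 1 - min x 1 ≤ y - x := by
      rcases le_total y 1 with h | h
      · rw [min_eq_left h, min_eq_left (hxy.trans h)]
      · rw [min_eq_right h]
        rcases le_total x 1 with h' | h'
        · rw [min_eq_left h']; linarith
        · rw [min_eq_right h']; linarith
    have hle : cseq 0 y - cseq 0 x ≤ y - x := by
      simp only [cseq]
      have hxy' : min x 1 ≤ min y 1 := min_le_min hxy le_rfl
      rcases le_total (min y 1) 0 with h | h
      · rw [max_eq_left h, max_eq_left (hxy'.trans h)]; linarith
      · rw [max_eq_right h]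
        rcases le_total (min x 1) 0 with h' | h'
        · rw [max_eq_left h']
          have hx0 : x ≤ 0 := by
            rcases min_le_iff.1 h' with h'' | h''
            · exact h''
            · linarith
          have := min_le_left y 1
          linarith
        · rw [max_eq_right h']; linarith
    rcases le_or_gt 1 (y - x) with hbig | hsmall
    · calc cseq 0 y - cseq 0 x ≤ 1 - 0 := by
            have := cseq_le_one 0 y; have := cseq_nonneg 0 x; linarith
      _ ≤ (y - x) ^ α := by simpa using one_le_rpow' hbig
    · exact hle.trans (self_le_rpow (by linarith) hsmall.le)
  | succ n ih =>
    intro x y hxy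
    rcases le_or_gt 1 (y - x) with hbig | hsmall
    · calc cseq (n+1) y - cseq (n+1) x ≤ 1 - 0 := by
            have := cseq_le_one (n+1) y; have := cseq_nonneg (n+1) x; linarith
      _ ≤ (y - x) ^ α := by simpa using one_le_rpow' hbig
    simp only [cseq]
    set u₁ := min (3*x) 1 with hu₁
    set u₂ := min (3*y) 1 with hu₂
    set v₁ := max (3*x - 2) 0 with hv₁
    set v₂ := max (3*y - 2) 0 with hv₂
    have hu : u₁ ≤ u₂ := min_le_min (by linarith) le_rfl
    have hv : v₁ ≤ v₂ := max_le_max (by linarith) le_rfl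
    have hA := ih hu
    have hB := ih hv
    have h3 : ((3:ℝ)*(y-x)) ^ α = 2 * (y - x) ^ α := by
      rw [Real.mul_rpow (by norm_num) (by linarith), three_rpow]
    rcases le_or_gt y (2/3) with hy23 | hy23
    · -- v₂ = v₁ = 0
      have hv2 : v₂ = 0 := max_eq_right (by linarith)
      have hv1' : v₁ = 0 := max_eq_right (by linarith)
      have hub : u₂ - u₁ ≤ 3*(y - x) := by
        rw [hu₁, hu₂]
        rcases le_or_gt (3*x) 1 with h | h
        · rw [min_eq_left h]
          exact le_trans (sub_le_sub_right (min_le_left _ _) _) (by linarith)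
        · rw [min_eq_right h.le, min_eq_right (by linarith : (1:ℝ) ≤ 3*y)]; linarith
      have : cseq n u₂ - cseq n u₁ ≤ (3*(y-x)) ^ α := by
        refine hA.trans ?_
        exact Real.rpow_le_rpow (by linarith) hub alpha_pos.le
      rw [hv2, hv1']
      rw [h3] at this
      linarith
    rcases le_or_gt (1/3) x with hx13 | hx13
    · -- u₁ = u₂ = 1
      have hu1' : u₁ = 1 := min_eq_right (by linarith)
      have hu2' : u₂ = 1 := min_eq_right (by linarith)
      have hvb : v₂ - v₁ ≤ 3*(y - x) := by
        rw [hv₁, hv₂]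
        rcases le_or_gt 0 (3*x - 2) with h | h
        · rw [max_eq_left h, max_eq_left (by linarith)]; linarith
        · rw [max_eq_right h.le, sub_zero]
          exact max_le (by linarith) (by nlinarith)
      have : cseq n v₂ - cseq n v₁ ≤ (3*(y-x)) ^ α := by
        refine hB.trans ?_
        exact Real.rpow_le_rpow (by linarith) hvb alpha_pos.le
      rw [hu1', hu2']
      rw [h3] at this
      linarith
    · -- straddling case : x < 1/3 and y > 2/3
      have ha2 : u₂ - u₁ ≤ 1 - 3*x := by
        rw [hu₁, hu₂, min_eq_left (by linarith : 3*x ≤ 1)]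
        exact sub_le_sub_right (min_le_right _ _) _
      have hb2 : v₂ - v₁ ≤ 3*y - 2 := by
        rw [hv₁, hv₂, max_eq_right (by linarith : 3*x - 2 ≤ 0)]
        simp only [sub_zero]
        exact max_le le_rfl (by linarith)
      have hsum : (u₂ - u₁) + (v₂ - v₁) ≤ 3*(y-x) - 1 := by linarith
      have hmid := rpow_midpoint (by linarith : (0:ℝ) ≤ u₂ - u₁) (by linarith : (0:ℝ) ≤ v₂ - v₁)
      have hmono : (((u₂ - u₁) + (v₂ - v₁))/2) ^ α ≤ ((3*(y-x) - 1)/2) ^ α := by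
        apply Real.rpow_le_rpow (by linarith) (by linarith) alpha_pos.le
      have hfin : ((3*(y-x) - 1)/2) ^ α ≤ (y - x) ^ α := by
        apply Real.rpow_le_rpow (by nlinarith) (by nlinarith) alpha_pos.le
      calc (cseq n u₂ + cseq n v₂)/2 - (cseq n u₁ + cseq n v₁)/2
          = ((cseq n u₂ - cseq n u₁) + (cseq n v₂ - cseq n v₁))/2 := by ring
        _ ≤ ((u₂ - u₁) ^ α + (v₂ - v₁) ^ α)/2 := by linarith
        _ ≤ (((u₂ - u₁) + (v₂ - v₁))/2) ^ α := by linarith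
        _ ≤ (y - x) ^ α := hmono.trans hfin

/-- adjacent approximants are uniformly close -/
lemma cseq_succ_dist (n : ℕ) (x : ℝ) : |cseq (n+1) x - cseq n x| ≤ (1/2) ^ n := by
  induction n generalizing x with
  | zero =>
    have h1 := cseq_le_one 1 x
    have h2 := cseq_nonneg 1 x
    have h3 := cseq_le_one 0 x
    have h4 := cseq_nonneg 0 x
    rw [abs_le]; constructor <;> simp <;> linarith
  | succ n ih =>
    have key : cseq (n+2) x - cseq (n+1) x
        = ((cseq (n+1) (min (3*x) 1) - cseq n (min (3*x) 1))
          + (cseq (n+1) (max (3*x - 2) 0) - cseq n (max (3*x - 2) 0))) / 2 := by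
      show (cseq (n+1) (min (3*x) 1) + cseq (n+1) (max (3*x - 2) 0)) / 2
          - (cseq n (min (3*x) 1) + cseq n (max (3*x - 2) 0)) / 2 = _
      ring
    rcases le_or_gt x (2/3) with h | h
    · have hmax : max (3*x - 2) 0 = 0 := max_eq_right (by linarith)
      rw [key, hmax, cseq_zero_eval, cseq_zero_eval]
      have := ih (min (3*x) 1)
      rw [abs_le] at this ⊢
      constructor
      · simp only [pow_succ]
        nlinarith [this.1, this.2]
      · simp only [pow_succ]
        nlinarith [this.1, this.2]
    · have hmin : min (3*x) 1 = 1 := min_eq_right (by linarith)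
      rw [key, hmin, cseq_one_eval, cseq_one_eval]
      have := ih (max (3*x - 2) 0)
      rw [abs_le] at this ⊢
      constructor
      · simp only [pow_succ]
        nlinarith [this.1, this.2]
      · simp only [pow_succ]
        nlinarith [this.1, this.2]

/-! ### The Cantor function as a limit -/

noncomputable def cant (x : ℝ) : ℝ := cseq 0 x + ∑' n, (cseq (n+1) x - cseq n x)

lemma cant_summable (x : ℝ) : Summable (fun n => cseq (n+1) x - cseq n x) := by
  apply Summable.of_norm_bounded (g := fun n => (1/2:ℝ) ^ n) (summable_geometric_of_lt_one
    (by norm_num) (by norm_num))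
  intro n
  simpa using cseq_succ_dist n x

lemma cant_tendsto (x : ℝ) : Filter.Tendsto (fun n => cseq n x) Filter.atTop (nhds (cant x)) := by
  have hs := (cant_summable x).hasSum
  have ht := hs.tendsto_sum_nat
  have heq : ∀ n, ∑ k ∈ Finset.range n, (cseq (k+1) x - cseq k x) = cseq n x - cseq 0 x := by
    intro n
    exact Finset.sum_range_sub (fun k => cseq k x) n
  have ht2 : Filter.Tendsto (fun n => cseq n x - cseq 0 x) Filter.atTop
      (nhds (∑' n, (cseq (n+1) x - cseq n x))) := by
    rw [show (fun n => cseq n x - cseq 0 x) = fun n => ∑ k ∈ Finset.range n,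
      (cseq (k+1) x - cseq k x) from funext fun n => (heq n).symm]
    exact ht
  have := ht2.add_const (cseq 0 x)
  simp only [sub_add_cancel] at this
  rw [cant, add_comm]
  exact this

lemma cant_mono : Monotone cant := by
  intro x y hxy
  exact le_of_tendsto_of_tendsto' (cant_tendsto x) (cant_tendsto y)
    (fun n => cseq_mono n hxy)

lemma cant_nonneg (x : ℝ) : 0 ≤ cant x :=
  ge_of_tendsto' (cant_tendsto x) (fun n => cseq_nonneg n x)

lemma cant_le_one (x : ℝ) : cant x ≤ 1 :=
  le_of_tendsto' (cant_tendsto x) (fun n => cseq_le_one n x)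

lemma cant_of_nonpos {x : ℝ} (hx : x ≤ 0) : cant x = 0 :=
  tendsto_nhds_unique (cant_tendsto x)
    (by simpa [funext fun n => cseq_of_nonpos n hx] using
      (tendsto_const_nhds : Filter.Tendsto (fun _ : ℕ => (0:ℝ)) Filter.atTop (nhds 0)))

lemma cant_of_one_le {x : ℝ} (hx : 1 ≤ x) : cant x = 1 :=
  tendsto_nhds_unique (cant_tendsto x)
    (by simpa [funext fun n => cseq_of_one_le n hx] using
      (tendsto_const_nhds : Filter.Tendsto (fun _ : ℕ => (1:ℝ)) Filter.atTop (nhds 1)))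

lemma cant_zero : cant 0 = 0 := cant_of_nonpos le_rfl
lemma cant_one : cant 1 = 1 := cant_of_one_le le_rfl

lemma cant_half {x : ℝ} (hx : x ≤ 1) : x / 2 ≤ cant x :=
  ge_of_tendsto' (cant_tendsto x) (fun n => cseq_half n hx)

lemma cant_holder {x y : ℝ} (hxy : x ≤ y) : cant y - cant x ≤ (y - x) ^ cantorAlpha :=
  le_of_tendsto_of_tendsto' ((cant_tendsto y).sub (cant_tendsto x)) tendsto_const_nhds
    (fun n => cseq_holder n hxy)

lemma cant_continuous : Continuous cant := by
  rw [Metric.continuous_iff]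
  intro x ε hε
  refine ⟨ε ^ (1/α), Real.rpow_pos_of_pos hε _, fun y hy => ?_⟩
  have key : ∀ a b : ℝ, a ≤ b → dist b a < ε ^ (1/α) → |cant b - cant a| < ε := by
    intro a b hab hd
    rw [Real.dist_eq, abs_of_nonneg (by linarith)] at hd
    rw [abs_of_nonneg (by linarith [cant_mono hab])]
    calc cant b - cant a ≤ (b - a) ^ α := cant_holder hab
      _ < (ε ^ (1/α)) ^ α := by
          apply Real.rpow_lt_rpow (by linarith) hd alpha_pos
      _ = ε := by
          rw [← Real.rpow_mul hε.le, one_div, inv_mul_cancel₀ (ne_of_gt alpha_pos),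
            Real.rpow_one]
  rcases le_total x y with h | h
  · rw [Real.dist_eq]
    exact key x y h hy
  · rw [Real.dist_eq, abs_sub_comm]
    exact key y x h (by rwa [dist_comm] at hy)

/-- self similarity, lower part -/
lemma cant_third {x : ℝ} (h0 : 0 ≤ x) (h1 : x ≤ 1) : cant (x/3) = cant x / 2 := by
  have hstep : ∀ n, cseq (n+1) (x/3) = cseq n x / 2 := by
    intro n
    show (cseq n (min (3*(x/3)) 1) + cseq n (max (3*(x/3) - 2) 0)) / 2 = cseq n x / 2
    rw [show (3:ℝ)*(x/3) = x by ring, min_eq_left h1,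
      max_eq_right (by linarith : x - 2 ≤ 0), cseq_zero_eval]
    ring
  have h1' : Filter.Tendsto (fun n => cseq (n+1) (x/3)) Filter.atTop (nhds (cant (x/3))) :=
    (cant_tendsto (x/3)).comp (Filter.tendsto_add_atTop_nat 1)
  have h2' : Filter.Tendsto (fun n => cseq n x / 2) Filter.atTop (nhds (cant x / 2)) :=
    (cant_tendsto x).div_const 2
  exact tendsto_nhds_unique (by rwa [funext hstep] at h1') h2'

/-- self similarity, upper part -/
lemma cant_third' {x : ℝ} (h0 : 0 ≤ x) (h1 : x ≤ 1) : cant ((x+2)/3) = (1 + cant x) / 2 := by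
  have hstep : ∀ n, cseq (n+1) ((x+2)/3) = (1 + cseq n x) / 2 := by
    intro n
    show (cseq n (min (3*((x+2)/3)) 1) + cseq n (max (3*((x+2)/3) - 2) 0)) / 2 = (1 + cseq n x) / 2
    rw [show (3:ℝ)*((x+2)/3) = x + 2 by ring, min_eq_right (by linarith : (1:ℝ) ≤ x + 2),
      show x + 2 - 2 = x by ring, max_eq_left h0, cseq_one_eval]
  have h1' : Filter.Tendsto (fun n => cseq (n+1) ((x+2)/3)) Filter.atTop
      (nhds (cant ((x+2)/3))) :=
    (cant_tendsto ((x+2)/3)).comp (Filter.tendsto_add_atTop_nat 1)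
  have h2' : Filter.Tendsto (fun n => (1 + cseq n x) / 2) Filter.atTop
      (nhds ((1 + cant x) / 2)) :=
    (((cant_tendsto x).const_add 1).div_const 2)
  exact tendsto_nhds_unique (by rwa [funext hstep] at h1') h2'

/-! ### generation-n endpoints of the Cantor set -/

noncomputable def ep : ℕ → ℕ → ℝ
  | 0, _ => 0
  | (n+1), i => if i < 2^n then ep n i / 3 else (ep n (i - 2^n) + 2)/3

lemma ep_mem : ∀ n, ∀ i < 2^n, 0 ≤ ep n i ∧ ep n i + (1/3:ℝ)^n ≤ 1 := by
  intro n
  induction n with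
  | zero => intro i hi; simp [ep]
  | succ n ih =>
    intro i hi
    by_cases h : i < 2^n
    · obtain ⟨h1, h2⟩ := ih i h
      rw [ep, if_pos h]
      constructor
      · positivity
      · rw [pow_succ]
        nlinarith
    · have hj : i - 2^n < 2^n := by
        have : i < 2^(n+1) := hi
        rw [pow_succ] at this
        omega
      obtain ⟨h1, h2⟩ := ih _ hj
      rw [ep, if_neg h]
      constructor
      · positivity
      · rw [pow_succ]
        nlinarith

lemma ep_inc : ∀ n, ∀ i < 2^n,
    cant (ep n i + (1/3:ℝ)^n) - cant (ep n i) = (1/2:ℝ)^n := by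
  intro n
  induction n with
  | zero =>
    intro i hi
    simp [ep, cant_zero, cant_one]
  | succ n ih =>
    intro i hi
    by_cases h : i < 2^n
    · obtain ⟨h1, h2⟩ := ep_mem n i h
      have hinc := ih i h
      rw [ep, if_pos h]
      have e1 : ep n i / 3 + (1/3:ℝ)^(n+1) = (ep n i + (1/3:ℝ)^n)/3 := by
        rw [pow_succ]; ring
      rw [e1, cant_third (by positivity) (by nlinarith),
        cant_third h1 (by nlinarith [pow_pos (by norm_num : (0:ℝ) < 1/3) n])]
      rw [pow_succ]
      linarith
    · have hj : i - 2^n < 2^n := by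
        have : i < 2^(n+1) := hi
        rw [pow_succ] at this
        omega
      obtain ⟨h1, h2⟩ := ep_mem n _ hj
      have hinc := ih _ hj
      rw [ep, if_neg h]
      have e1 : (ep n (i - 2^n) + 2) / 3 + (1/3:ℝ)^(n+1) = ((ep n (i - 2^n) + (1/3:ℝ)^n) + 2)/3 := by
        rw [pow_succ]; ring
      rw [e1, cant_third' (by positivity) (by nlinarith),
        cant_third' h1 (by nlinarith [pow_pos (by norm_num : (0:ℝ) < 1/3) n])]
      rw [pow_succ]
      linarith

lemma ep_sep : ∀ n, ∀ i j : ℕ, i < j → j < 2^n → ep n i + (1/3:ℝ)^n ≤ ep n j := by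
  intro n
  induction n with
  | zero => intro i j hij hj; omega
  | succ n ih =>
    intro i j hij hj
    by_cases hjn : j < 2^n
    · have hin : i < 2^n := lt_trans hij hjn
      simp only [ep]
      rw [if_pos hin, if_pos hjn]
      have := ih i j hij hjn
      rw [pow_succ]
      linarith
    · by_cases hin : i < 2^n
      · -- i in lower half, j in upper half
        obtain ⟨h1, h2⟩ := ep_mem n i hin
        have hj1 : 0 ≤ ep n (j - 2^n) := by
          have hjj : j - 2^n < 2^n := by
            have : j < 2^(n+1) := hj
            rw [pow_succ] at this; omega
          exact (ep_mem n _ hjj).1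
        simp only [ep]
        rw [if_pos hin, if_neg hjn]
        rw [pow_succ]
        nlinarith
      · -- both upper half
        have hii : i - 2^n < j - 2^n := by omega
        have hjj : j - 2^n < 2^n := by
          have : j < 2^(n+1) := hj
          rw [pow_succ] at this; omega
        have := ih _ _ hii hjj
        simp only [ep]
        rw [if_neg hin, if_neg hjn]
        rw [pow_succ]
        linarith

/-! ### The function f and the modulus Φ -/

noncomputable def ff (x : ℝ) : ℝ :=
  cant x / 2 + (min (max (x - 2) 0) 1) ^ cantorAlpha + (max (x - 3) 0) / 4

noncomputable def Phi (h : ℝ) : ℝ := (min h 1) ^ cantorAlpha + (max (h - 1) 0) / 4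

lemma ff_eval_A {x : ℝ} (hx : x ≤ 1) : ff x = cant x / 2 := by
  rw [ff, max_eq_right (by linarith : x - 2 ≤ 0), max_eq_right (by linarith : x - 3 ≤ 0),
    min_eq_left (by norm_num : (0:ℝ) ≤ 1), Real.zero_rpow (ne_of_gt alpha_pos)]
  ring

lemma ff_eval_B {x : ℝ} (h1 : 1 ≤ x) (h2 : x ≤ 2) : ff x = 1/2 := by
  rw [ff, cant_of_one_le h1, max_eq_right (by linarith : x - 2 ≤ 0),
    max_eq_right (by linarith : x - 3 ≤ 0),
    min_eq_left (by norm_num : (0:ℝ) ≤ 1), Real.zero_rpow (ne_of_gt alpha_pos)]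
  ring

lemma ff_eval_C {x : ℝ} (h1 : 2 ≤ x) (h2 : x ≤ 3) : ff x = 1/2 + (x - 2) ^ cantorAlpha := by
  rw [ff, cant_of_one_le (by linarith), max_eq_left (by linarith : 0 ≤ x - 2),
    max_eq_right (by linarith : x - 3 ≤ 0), min_eq_left (by linarith : x - 2 ≤ 1)]
  ring

lemma ff_eval_D {x : ℝ} (h1 : 3 ≤ x) : ff x = 3/2 + (x - 3)/4 := by
  rw [ff, cant_of_one_le (by linarith), max_eq_left (by linarith : 0 ≤ x - 2),
    max_eq_left (by linarith : 0 ≤ x - 3), min_eq_right (by linarith : (1:ℝ) ≤ x - 2),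
    Real.one_rpow]
  ring

lemma Phi_eval_lo {h : ℝ} (h1 : h ≤ 1) : Phi h = h ^ cantorAlpha := by
  rw [Phi, min_eq_left h1, max_eq_right (by linarith : h - 1 ≤ 0)]
  ring

lemma Phi_eval_hi {h : ℝ} (h1 : 1 ≤ h) : Phi h = 1 + (h - 1)/4 := by
  rw [Phi, min_eq_right h1, max_eq_left (by linarith : 0 ≤ h - 1), Real.one_rpow]

lemma Phi_nonneg {h : ℝ} (h0 : 0 ≤ h) : 0 ≤ Phi h := by
  rcases le_total h 1 with h1 | h1
  · rw [Phi_eval_lo h1]; positivity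
  · rw [Phi_eval_hi h1]; linarith

lemma Phi_mono : MonotoneOn Phi (Set.Ici 0) := by
  intro x hx y hy hxy
  simp only [Set.mem_Ici] at hx hy
  rw [Phi, Phi]
  have h1 : (min x 1) ^ α ≤ (min y 1) ^ α := by
    apply Real.rpow_le_rpow (le_min hx (by norm_num)) (min_le_min hxy le_rfl) alpha_pos.le
  have h2 : max (x-1) 0 ≤ max (y-1) 0 := max_le_max (by linarith) le_rfl
  linarith

lemma ff_mono : Monotone ff := by
  intro x y hxy
  rw [ff, ff]
  have h1 : cant x / 2 ≤ cant y / 2 := by linarith [cant_mono hxy]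
  have h2 : (min (max (x - 2) 0) 1) ^ α ≤ (min (max (y - 2) 0) 1) ^ α := by
    apply Real.rpow_le_rpow (le_min (le_max_right _ _) (by norm_num))
      (min_le_min (max_le_max (by linarith) le_rfl) le_rfl) alpha_pos.le
  have h3 : (max (x - 3) 0)/4 ≤ (max (y - 3) 0)/4 := by
    have := max_le_max (by linarith : x - 3 ≤ y - 3) (le_refl (0:ℝ))
    linarith
  linarith

lemma ff_continuous : Continuous ff := by
  apply Continuous.add
  apply Continuous.add
  · exact cant_continuous.div_const 2
  · apply Continuous.comp (g := fun t : ℝ => t ^ α)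
    · apply continuous_iff_continuousAt.2
      intro t
      apply Real.continuousAt_rpow_const
      right; exact alpha_pos.le
    · exact (continuous_id.sub continuous_const).max continuous_const |>.min continuous_const
  · exact ((continuous_id.sub continuous_const).max continuous_const).div_const 4

lemma ff_nonneg (x : ℝ) : 0 ≤ ff x := by
  rw [ff]
  have := cant_nonneg x
  have : (0:ℝ) ≤ (min (max (x - 2) 0) 1) ^ α :=
    Real.rpow_nonneg (le_min (le_max_right _ _) (by norm_num)) _
  positivity

lemma ff_le (x : ℝ) (hx : x ≤ 7) : ff x ≤ 5/2 := by
  rw [ff]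
  have h1 := cant_le_one x
  have h2 : (min (max (x - 2) 0) 1) ^ α ≤ 1 :=
    Real.rpow_le_one (le_min (le_max_right _ _) (by norm_num)) (min_le_right _ _) alpha_pos.le
  have h3 : max (x - 3) 0 ≤ 4 := max_le (by linarith) (by norm_num)
  linarith

/-! ### The core inequality : every increment of `ff` is at most `Phi` of the length -/

lemma core {x y : ℝ} (hx : 0 ≤ x) (hxy : x ≤ y) (hy : y ≤ 7) :
    ff y - ff x ≤ Phi (y - x) := by
  rcases le_total y 1 with hy1 | hy1
  · -- case AA
    rw [ff_eval_A hy1, ff_eval_A (hxy.trans hy1), Phi_eval_lo (by linarith)]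
    have h1 := cant_holder hxy
    have h2 : (0:ℝ) ≤ (y - x) ^ α := Real.rpow_nonneg (by linarith) _
    linarith
  rcases le_total x 1 with hx1 | hx1
  · -- x in A
    rcases le_total y 2 with hy2 | hy2
    · -- case AB
      rw [ff_eval_A hx1, ff_eval_B hy1 hy2]
      have hh : 1 - x ≤ y - x := by linarith
      have hch : cant 1 - cant x ≤ (1 - x) ^ α := cant_holder hx1
      rw [cant_one] at hch
      rcases le_total (y - x) 1 with h1 | h1
      · rw [Phi_eval_lo h1]
        have : (1 - x) ^ α ≤ (y - x) ^ α :=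
          Real.rpow_le_rpow (by linarith) hh alpha_pos.le
        have : (0:ℝ) ≤ (y-x) ^ α := Real.rpow_nonneg (by linarith) _
        nlinarith
      · rw [Phi_eval_hi h1]
        have := cant_nonneg x
        linarith
    rcases le_total y 3 with hy3 | hy3
    · -- case AC
      rw [ff_eval_A hx1, ff_eval_C hy2 hy3, Phi_eval_hi (by linarith)]
      have hc := cant_half hx1
      have hq := rpow_quarter (by linarith : (0:ℝ) ≤ y - 2) (by linarith : y - 2 ≤ 1)
      linarith
    · -- case AD
      rw [ff_eval_A hx1, ff_eval_D hy3, Phi_eval_hi (by linarith)]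
      have hc := cant_half hx1
      linarith
  rcases le_total x 2 with hx2 | hx2
  · -- x in B
    rcases le_total y 2 with hy2 | hy2
    · -- case BB
      rw [ff_eval_B hx1 hx2, ff_eval_B hy1 hy2]
      simpa using Phi_nonneg (by linarith : (0:ℝ) ≤ y - x)
    rcases le_total y 3 with hy3 | hy3
    · -- case BC
      rw [ff_eval_B hx1 hx2, ff_eval_C hy2 hy3]
      have hw : y - 2 ≤ y - x := by linarith
      rcases le_total (y - x) 1 with h1 | h1
      · rw [Phi_eval_lo h1]
        have : (y - 2) ^ α ≤ (y - x) ^ α :=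
          Real.rpow_le_rpow (by linarith) hw alpha_pos.le
        linarith
      · rw [Phi_eval_hi h1]
        have : (y - 2) ^ α ≤ 1 := rpow_le_one' (by linarith) (by linarith)
        linarith
    · -- case BD
      rw [ff_eval_B hx1 hx2, ff_eval_D hy3, Phi_eval_hi (by linarith)]
      linarith
  rcases le_total x 3 with hx3 | hx3
  · -- x in C
    rcases le_total y 3 with hy3 | hy3
    · -- case CC
      rw [ff_eval_C hx2 hx3, ff_eval_C (by linarith) hy3, Phi_eval_lo (by linarith)]
      have hsub : (y - 2) ^ α ≤ (x - 2) ^ α + (y - x) ^ α := by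
        have := rpow_subadd (by linarith : (0:ℝ) ≤ x - 2) (by linarith : (0:ℝ) ≤ y - x)
        rw [show x - 2 + (y - x) = y - 2 by ring] at this
        exact this
      linarith
    · -- case CD
      rw [ff_eval_C hx2 hx3, ff_eval_D hy3]
      set s := x - 2 with hs
      set l := y - 3 with hl
      have hs0 : 0 ≤ s := by simp [hs]; linarith
      have hs1 : s ≤ 1 := by simp [hs]; linarith
      have hl0 : 0 ≤ l := by simp [hl]; linarith
      have hcal : y - x = 1 - s + l := by simp [hs, hl]; ring
      rcases le_total s l with hsl | hsl
      · rw [Phi_eval_hi (by rw [hcal]; linarith)]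
        have h1 : s/4 ≤ s ^ α := le_trans (by linarith) (self_le_rpow hs0 hs1)
        rw [hcal]
        linarith
      · rw [Phi_eval_lo (by rw [hcal]; linarith)]
        set q := s - l with hq
        have hq0 : 0 ≤ q := by simp [hq]; linarith
        have hq1 : q ≤ 1 := by simp [hq]; linarith
        have hA : 1 ≤ (1 - q) ^ α + q ^ α := by
          have := rpow_subadd (by linarith : (0:ℝ) ≤ 1 - q) hq0
          rw [show (1 - q) + q = 1 by ring, Real.one_rpow] at this
          exact this
        have hB : α * (s - q) ≤ s ^ α - q ^ α := rpow_diff_ge hq0 (by simp [hq]; linarith) hs1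
        have hC : l/4 ≤ α * l := by nlinarith [alpha_gt_quarter]
        have hD : y - x = 1 - q := by simp [hq, hs, hl]; ring
        have hE : s - q = l := by simp [hq]
        have hB' : α * l ≤ s ^ α - q ^ α := by rw [← hE]; exact hB
        rw [hD]
        clear_value s l q
        linarith [hA, hB', hC]
  · -- case DD
    rw [ff_eval_D hx3, ff_eval_D (by linarith)]
    rcases le_total (y - x) 1 with h1 | h1
    · rw [Phi_eval_lo h1]
      have := self_le_rpow (by linarith : (0:ℝ) ≤ y - x) h1
      linarith
    · rw [Phi_eval_hi h1]
      linarith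

/-! ### Evaluating the modulus of continuity -/

def mcSet (δ : ℝ) : Set ℝ :=
  {d : ℝ | ∃ x ∈ Set.Icc (0:ℝ) 7, ∃ y ∈ Set.Icc (0:ℝ) 7, |x - y| ≤ δ ∧ d = |ff x - ff y|}

lemma mcSet_nonempty {δ : ℝ} (hδ : 0 ≤ δ) : (mcSet δ).Nonempty :=
  ⟨0, 0, by norm_num, 0, by norm_num, by simpa using hδ, by simp⟩

lemma mcSet_bound {δ : ℝ} (hδ : δ ≤ 7) : ∀ d ∈ mcSet δ, d ≤ Phi δ := by
  rintro d ⟨x, hx, y, hy, hxyδ, rfl⟩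
  have key : ∀ a b : ℝ, a ∈ Set.Icc (0:ℝ) 7 → b ∈ Set.Icc (0:ℝ) 7 → a ≤ b → b - a ≤ δ →
      ff b - ff a ≤ Phi δ := by
    intro a b ha hb hab habδ
    have h0δ : 0 ≤ δ := le_trans (by linarith) habδ
    calc ff b - ff a ≤ Phi (b - a) := core ha.1 hab hb.2
      _ ≤ Phi δ := Phi_mono (by simp; linarith) (by simpa using h0δ) habδ
  rcases le_total x y with h | h
  · rw [abs_of_nonpos (by linarith : x - y ≤ 0)] at hxyδ
    rw [abs_of_nonpos (by linarith [ff_mono h] : ff x - ff y ≤ 0)]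
    have := key x y hx hy h (by linarith)
    linarith
  · rw [abs_of_nonneg (by linarith : 0 ≤ x - y)] at hxyδ
    rw [abs_of_nonneg (by linarith [ff_mono h] : 0 ≤ ff x - ff y)]
    exact key y x hy hx h (by linarith)

lemma mcSet_bddAbove {δ : ℝ} (hδ : δ ≤ 7) : BddAbove (mcSet δ) :=
  ⟨Phi δ, fun d hd => mcSet_bound hδ d hd⟩

lemma omega_eq {δ : ℝ} (h0 : 0 ≤ δ) (h7 : δ ≤ 7) : sSup (mcSet δ) = Phi δ := by
  apply le_antisymm
  · exact csSup_le (mcSet_nonempty h0) (mcSet_bound h7)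
  · -- attainment
    rcases le_total δ 1 with h1 | h1
    · -- witness [2, 2+δ]
      have hval : |ff 2 - ff (2 + δ)| = Phi δ := by
        rw [ff_eval_B (by norm_num) (by norm_num),
          show ff (2 + δ) = 1/2 + (2 + δ - 2) ^ α from ff_eval_C (by linarith) (by linarith),
          Phi_eval_lo h1, show (2:ℝ) + δ - 2 = δ by ring]
        have : (0:ℝ) ≤ δ ^ α := Real.rpow_nonneg h0 _
        rw [abs_of_nonpos (by linarith)]
        ring
      have hmem : Phi δ ∈ mcSet δ := by
        exact ⟨2, by norm_num, 2 + δ, ⟨by linarith, by linarith⟩, by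
          rw [abs_of_nonpos (by linarith)]; linarith, hval.symm⟩
      exact le_csSup (mcSet_bddAbove h7) hmem
    · rcases le_total δ 5 with h5 | h5
      · have hval : |ff 2 - ff (2 + δ)| = Phi δ := by
          rw [ff_eval_B (by norm_num) (by norm_num),
            show ff (2 + δ) = 3/2 + (2 + δ - 3)/4 from ff_eval_D (by linarith),
            Phi_eval_hi h1]
          rw [abs_of_nonpos (by linarith)]
          ring
        have hmem : Phi δ ∈ mcSet δ := by
          exact ⟨2, by norm_num, 2 + δ, ⟨by linarith, by linarith⟩, by
            rw [abs_of_nonpos (by linarith)]; linarith, hval.symm⟩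
        exact le_csSup (mcSet_bddAbove h7) hmem
      · have hval : |ff 0 - ff δ| = Phi δ := by
          rw [show ff 0 = cant 0 / 2 from ff_eval_A (by norm_num), cant_zero,
            show ff δ = 3/2 + (δ - 3)/4 from ff_eval_D (by linarith),
            Phi_eval_hi h1]
          rw [abs_of_nonpos (by linarith)]
          ring
        have hmem : Phi δ ∈ mcSet δ := by
          exact ⟨0, by norm_num, δ, ⟨by linarith, by linarith⟩, by
            rw [abs_of_nonpos (by linarith)]; linarith, hval.symm⟩
        exact le_csSup (mcSet_bddAbove h7) hmem

/-! ### Sum over disjoint intervals of a monotone function -/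

lemma disjoint_sum_mono (φ : ℝ → ℝ) (hφ : Monotone φ) (c : ℝ) (x y : ℕ → ℝ) :
    ∀ s : Finset ℕ, ∀ d : ℝ, c ≤ d →
    (∀ i ∈ s, c ≤ x i ∧ x i ≤ y i ∧ y i ≤ d) →
    (∀ i ∈ s, ∀ j ∈ s, i ≠ j → Disjoint (Set.Ioo (x i) (y i)) (Set.Ioo (x j) (y j))) →
    (∑ i ∈ s, (φ (y i) - φ (x i))) ≤ φ d - φ c := by
  intro s
  induction s using Finset.strongInduction with
  | _ s ih =>
    intro d hcd hmem hdisj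
    rcases Finset.eq_empty_or_nonempty s with rfl | hne
    · simp
      linarith [hφ hcd]
    · by_cases hdeg : ∃ i ∈ s, x i = y i
      · obtain ⟨i₀, hi₀, hdegi⟩ := hdeg
        have hsub : s.erase i₀ ⊂ s := Finset.erase_ssubset hi₀
        have := ih _ hsub d hcd (fun i hi => hmem i (Finset.mem_of_mem_erase hi))
          (fun i hi j hj hij => hdisj i (Finset.mem_of_mem_erase hi)
            j (Finset.mem_of_mem_erase hj) hij)
        rw [← Finset.add_sum_erase s _ hi₀]
        rw [hdegi]
        simpa using this
      · push_neg at hdeg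
        obtain ⟨i₀, hi₀, hmax⟩ := Finset.exists_max_image s y hne
        have hstrict : ∀ i ∈ s, x i < y i := fun i hi =>
          lt_of_le_of_ne (hmem i hi).2.1 (hdeg i hi)
        have hkey : ∀ j ∈ s.erase i₀, y j ≤ x i₀ := by
          intro j hj
          have hjs := Finset.mem_of_mem_erase hj
          have hjne := Finset.ne_of_mem_erase hj
          by_contra hcon
          push_neg at hcon
          have hdisj' := hdisj j hjs i₀ hi₀ hjne
          have hne' : (Set.Ioo (max (x j) (x i₀)) (y j)).Nonempty := by
            apply Set.nonempty_Ioo.2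
            apply max_lt (hstrict j hjs) hcon
          obtain ⟨t, ht⟩ := hne'
          have ht1 : t ∈ Set.Ioo (x j) (y j) :=
            ⟨lt_of_le_of_lt (le_max_left _ _) ht.1, ht.2⟩
          have ht2 : t ∈ Set.Ioo (x i₀) (y i₀) :=
            ⟨lt_of_le_of_lt (le_max_right _ _) ht.1,
             lt_of_lt_of_le ht.2 (hmax j hjs)⟩
          exact Set.disjoint_left.1 hdisj' ht1 ht2
        have hsub : s.erase i₀ ⊂ s := Finset.erase_ssubset hi₀
        have hIH := ih _ hsub (x i₀) (hmem i₀ hi₀).1 (fun i hi =>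
          ⟨(hmem i (Finset.mem_of_mem_erase hi)).1,
           (hmem i (Finset.mem_of_mem_erase hi)).2.1, hkey i hi⟩)
          (fun i hi j hj hij => hdisj i (Finset.mem_of_mem_erase hi)
            j (Finset.mem_of_mem_erase hj) hij)
        rw [← Finset.add_sum_erase s _ hi₀]
        have : φ (y i₀) ≤ φ d := hφ (hmem i₀ hi₀).2.2
        linarith [hIH]

/-! ### Absolute continuity estimates for Phi -/

lemma min_min_r {r t : ℝ} (hr1 : r ≤ 1) : min (min t 1) r = min t r := by
  rw [min_assoc, min_eq_right hr1]

lemma phi_decomp {r : ℝ} (hr0 : 0 < r) (hr1 : r ≤ 1) {x y : ℝ} (hx : 0 ≤ x) (hxy : x ≤ y) :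
    Phi y - Phi x ≤ ((min y r) ^ α - (min x r) ^ α)
      + (α * (r ^ α / r) + 1/4) * (y - x) := by
  have hL0 : 0 ≤ α * (r ^ α / r) :=
    mul_nonneg alpha_pos.le (div_nonneg (Real.rpow_nonneg hr0.le _) hr0.le)
  rw [Phi, Phi]
  have part2 : max (y-1) 0 - max (x-1) 0 ≤ y - x := by
    rcases le_total (y-1) 0 with h | h
    · rw [max_eq_right h, max_eq_right (by linarith)]; linarith
    · rw [max_eq_left h]
      rcases le_total (x-1) 0 with h' | h'
      · rw [max_eq_right h']; linarith
      · rw [max_eq_left h']; linarith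
  set u := min x 1 with hu
  set v := min y 1 with hv
  have hu0 : 0 ≤ u := le_min hx (by norm_num)
  have huv : u ≤ v := min_le_min hxy le_rfl
  have hv1 : v ≤ 1 := min_le_right _ _
  have hvu : v - u ≤ y - x := by
    rw [hu, hv]
    rcases le_total y 1 with h | h
    · rw [min_eq_left h, min_eq_left (by linarith)]
    · rw [min_eq_right h]
      rcases le_total x 1 with h' | h'
      · rw [min_eq_left h']; linarith
      · rw [min_eq_right h']; linarith
  have hxr : min x r = min u r := (min_min_r hr1).symm
  have hyr : min y r = min v r := (min_min_r hr1).symm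
  rw [hxr, hyr]
  -- main claim on [0,1]
  have main : v ^ α - u ^ α ≤ ((min v r) ^ α - (min u r) ^ α)
      + α * (r ^ α / r) * (v - u) := by
    rcases le_total v r with hvr | hvr
    · rw [min_eq_left hvr, min_eq_left (huv.trans hvr)]
      nlinarith [hL0, huv]
    rcases le_total r u with hur | hur
    · rw [min_eq_right hvr, min_eq_right hur]
      have hd := rpow_diff_le (lt_of_lt_of_le hr0 hur) huv
      have hcomp : u ^ α / u ≤ r ^ α / r := by
        rw [div_le_div_iff₀ (by linarith) hr0]
        have ht : (1:ℝ) ≤ u / r := (one_le_div hr0).2 hur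
        have : (u/r) ^ α ≤ u/r := by
          calc (u/r) ^ α ≤ (u/r) ^ (1:ℝ) :=
                Real.rpow_le_rpow_of_exponent_le ht alpha_lt_one.le
            _ = u/r := Real.rpow_one _
        have hrw : (u/r) ^ α = u ^ α / r ^ α :=
          Real.div_rpow hu0 hr0.le _
        rw [hrw] at this
        have hrpos : (0:ℝ) < r ^ α := Real.rpow_pos_of_pos hr0 _
        rw [div_le_div_iff₀ hrpos hr0] at this
        linarith
      have : α * (u ^ α / u) * (v - u) ≤ α * (r ^ α / r) * (v - u) := by
        apply mul_le_mul_of_nonneg_right _ (by linarith)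
        exact mul_le_mul_of_nonneg_left hcomp alpha_pos.le
      linarith
    · -- u < r < v
      rw [min_eq_right hvr, min_eq_left hur]
      have hd := rpow_diff_le hr0 hvr
      have : α * (r ^ α / r) * (v - r) ≤ α * (r ^ α / r) * (v - u) := by
        apply mul_le_mul_of_nonneg_left (by linarith) hL0
      linarith
  nlinarith [main, part2, hL0, hvu]

noncomputable def psi (r t : ℝ) : ℝ := (min (max t 0) r) ^ α

lemma psi_mono {r : ℝ} (hr0 : 0 ≤ r) : Monotone (psi r) := by
  intro a b hab
  apply Real.rpow_le_rpow (le_min (le_max_right _ _) hr0)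
    (min_le_min (max_le_max hab le_rfl) le_rfl) alpha_pos.le

lemma psi_eq {r t : ℝ} (ht : 0 ≤ t) : psi r t = (min t r) ^ α := by
  rw [psi, max_eq_left ht]

/-! ### The modulus of continuity of `ff` equals `Phi` on `[0,7]` -/

lemma modCont_eq {t : ℝ} (h0 : 0 ≤ t) (h7 : t ≤ 7) : modCont ff 0 7 t = Phi t := by
  have : modCont ff 0 7 t = sSup (mcSet t) := rfl
  rw [this, omega_eq h0 h7]

/-! ### `modCont ff 0 7` is absolutely continuous -/

theorem modulus_AC : AbsolutelyContinuousOn (modCont ff 0 7) 0 7 := by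
  intro ε hε
  set t0 := ((ε/4) ^ (α⁻¹) : ℝ) with ht0def
  have ht0 : 0 < t0 := Real.rpow_pos_of_pos (by linarith) _
  set r := min 1 t0 with hrdef
  have hr0 : 0 < r := lt_min one_pos ht0
  have hr1 : r ≤ 1 := min_le_left _ _
  have ht0a : t0 ^ α = ε/4 := by
    rw [ht0def, ← Real.rpow_mul (by linarith : (0:ℝ) ≤ ε/4),
      inv_mul_cancel₀ (ne_of_gt alpha_pos), Real.rpow_one]
  have hra : r ^ α ≤ ε/4 := by
    rcases min_cases 1 t0 with ⟨h, h'⟩ | ⟨h, h'⟩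
    · rw [hrdef, h, Real.one_rpow]
      calc (1:ℝ) = 1 ^ α := (Real.one_rpow _).symm
        _ ≤ t0 ^ α := Real.rpow_le_rpow (by norm_num) h' alpha_pos.le
        _ = ε/4 := ht0a
    · rw [hrdef, h, ht0a]
  set L := α * (r ^ α / r) + 1/4 with hLdef
  have hL0 : 0 < L := by
    have : 0 ≤ α * (r ^ α / r) :=
      mul_nonneg alpha_pos.le (div_nonneg (Real.rpow_nonneg hr0.le _) hr0.le)
    rw [hLdef]; linarith
  refine ⟨ε/2/(L+1), by positivity, ?_⟩
  intro n x y hmem hdisj hlen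
  have hterm : ∀ i ∈ Finset.range n,
      |modCont ff 0 7 (y i) - modCont ff 0 7 (x i)| = Phi (y i) - Phi (x i) := by
    intro i hi
    obtain ⟨h1, h2, h3⟩ := hmem i (Finset.mem_range.1 hi)
    rw [modCont_eq (by linarith) h3, modCont_eq h1 (by linarith)]
    rw [abs_of_nonneg (by
      have := Phi_mono (Set.mem_Ici.2 h1) (Set.mem_Ici.2 (by linarith : (0:ℝ) ≤ y i)) h2
      linarith)]
  rw [Finset.sum_congr rfl hterm]
  have hstep : ∀ i ∈ Finset.range n,
      Phi (y i) - Phi (x i) ≤ (psi r (y i) - psi r (x i)) + L * (y i - x i) := by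
    intro i hi
    obtain ⟨h1, h2, h3⟩ := hmem i (Finset.mem_range.1 hi)
    rw [psi_eq (by linarith : (0:ℝ) ≤ y i), psi_eq h1]
    exact phi_decomp hr0 hr1 h1 h2
  calc ∑ i ∈ Finset.range n, (Phi (y i) - Phi (x i))
      ≤ ∑ i ∈ Finset.range n, ((psi r (y i) - psi r (x i)) + L * (y i - x i)) :=
        Finset.sum_le_sum hstep
    _ = (∑ i ∈ Finset.range n, (psi r (y i) - psi r (x i)))
        + L * (∑ i ∈ Finset.range n, (y i - x i)) := by
        rw [Finset.sum_add_distrib, Finset.mul_sum]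
    _ ≤ (psi r 7 - psi r 0) + L * (∑ i ∈ Finset.range n, (y i - x i)) := by
        have := disjoint_sum_mono (psi r) (psi_mono hr0.le) 0 x y (Finset.range n) 7
          (by norm_num)
          (fun i hi => hmem i (Finset.mem_range.1 hi))
          (fun i hi j hj hij => hdisj i (Finset.mem_range.1 hi) j (Finset.mem_range.1 hj) hij)
        linarith
    _ < (psi r 7 - psi r 0) + L * (ε/2/(L+1)) := by
        have := mul_lt_mul_of_pos_left hlen hL0
        linarith
    _ ≤ ε/4 + L * (ε/2/(L+1)) := by
        have h7 : psi r 7 = r ^ α := by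
          rw [psi_eq (by norm_num : (0:ℝ) ≤ 7), min_eq_right (by linarith : r ≤ 7)]
        have h0' : psi r 0 = 0 := by
          rw [psi_eq le_rfl, min_eq_left hr0.le, Real.zero_rpow (ne_of_gt alpha_pos)]
        rw [h7, h0']
        linarith
    _ < ε := by
        have hq : L * (ε/2/(L+1)) < ε/2 := by
          rw [div_div, mul_comm]
          rw [div_mul_eq_mul_div, div_lt_iff₀ (by positivity : (0:ℝ) < 2 * (L+1))]
          nlinarith
        linarith

/-! ### `ff` is not absolutely continuous -/

theorem f_not_AC : ¬ AbsolutelyContinuousOn ff 0 7 := by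
  intro hAC
  obtain ⟨δ, hδ, hprop⟩ := hAC (1/2) (by norm_num)
  obtain ⟨m, hm⟩ := exists_pow_lt_of_lt_one hδ (by norm_num : (2/3:ℝ) < 1)
  have hp3 : (0:ℝ) < (1/3:ℝ)^m := by positivity
  have h1 : ∀ i < 2^m, (0:ℝ) ≤ ep m i ∧ ep m i ≤ ep m i + (1/3:ℝ)^m
      ∧ ep m i + (1/3:ℝ)^m ≤ 7 := by
    intro i hi
    obtain ⟨ha, hb⟩ := ep_mem m i hi
    exact ⟨ha, by linarith, by linarith⟩
  have h2 : ∀ i < 2^m, ∀ j < 2^m, i ≠ j →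
      Disjoint (Set.Ioo (ep m i) (ep m i + (1/3:ℝ)^m))
        (Set.Ioo (ep m j) (ep m j + (1/3:ℝ)^m)) := by
    have key : ∀ i j, i < j → j < 2^m →
        Disjoint (Set.Ioo (ep m i) (ep m i + (1/3:ℝ)^m))
          (Set.Ioo (ep m j) (ep m j + (1/3:ℝ)^m)) := by
      intro i j hij hj
      have hsep := ep_sep m i j hij hj
      rw [Set.disjoint_left]
      intro t ht1 ht2
      have h1' : t < ep m i + (1/3:ℝ)^m := ht1.2
      have h2' : ep m j < t := ht2.1
      linarith
    intro i hi j hj hij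
    rcases lt_or_gt_of_ne hij with h | h
    · exact key i j h hj
    · exact (key j i h hi).symm
  have h3 : (∑ i ∈ Finset.range (2^m),
      ((ep m i + (1/3:ℝ)^m) - ep m i)) < δ := by
    have heq : ∀ i ∈ Finset.range (2^m), (ep m i + (1/3:ℝ)^m) - ep m i = (1/3:ℝ)^m := by
      intro i _; ring
    rw [Finset.sum_congr rfl heq, Finset.sum_const, Finset.card_range, nsmul_eq_mul]
    have hpp : ((2:ℝ)^m) * (1/3:ℝ)^m = (2/3:ℝ)^m := by
      rw [← mul_pow]; norm_num
    push_cast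
    rw [hpp]
    exact hm
  have h4 := hprop (2^m) (fun i => ep m i) (fun i => ep m i + (1/3:ℝ)^m) h1 h2 h3
  have h5 : (∑ i ∈ Finset.range (2^m),
      |ff (ep m i + (1/3:ℝ)^m) - ff (ep m i)|) = 1/2 := by
    have hterm : ∀ i ∈ Finset.range (2^m),
        |ff (ep m i + (1/3:ℝ)^m) - ff (ep m i)| = (1/2:ℝ)^(m+1) := by
      intro i hi
      have him := Finset.mem_range.1 hi
      obtain ⟨ha, hb⟩ := ep_mem m i him
      have hy1 : ep m i + (1/3:ℝ)^m ≤ 1 := hb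
      have hx1 : ep m i ≤ 1 := by linarith
      rw [ff_eval_A hy1, ff_eval_A hx1]
      have hinc := ep_inc m i him
      rw [abs_of_nonneg (by
        have := cant_mono (by linarith : ep m i ≤ ep m i + (1/3:ℝ)^m)
        linarith)]
      rw [show cant (ep m i + (1/3:ℝ)^m) / 2 - cant (ep m i) / 2
        = (cant (ep m i + (1/3:ℝ)^m) - cant (ep m i)) / 2 by ring, hinc]
      rw [pow_succ]
      ring
    rw [Finset.sum_congr rfl hterm, Finset.sum_const, Finset.card_range, nsmul_eq_mul]
    push_cast
    rw [pow_succ, show ((2:ℝ))^m * ((1/2:ℝ)^m * (1/2)) = ((2:ℝ) * (1/2:ℝ))^m * (1/2) by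
      rw [mul_pow]; ring]
    norm_num
  rw [h5] at h4
  norm_num at h4

end Stmt10Aux

theorem stmt10 :
    ∃ f : ℝ → ℝ,
      (∀ x ∈ Set.Icc (0:ℝ) 7, f x ∈ Set.Icc (0:ℝ) 7) ∧
      MonotoneOn f (Set.Icc 0 7) ∧
      ContinuousOn f (Set.Icc 0 7) ∧
      ¬ AbsolutelyContinuousOn f 0 7 ∧
      AbsolutelyContinuousOn (modCont f 0 7) 0 7 := by
  refine ⟨Stmt10Aux.ff, ?_, ?_, ?_, Stmt10Aux.f_not_AC, Stmt10Aux.modulus_AC⟩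
  · intro x hx
    exact ⟨Stmt10Aux.ff_nonneg x, le_trans (Stmt10Aux.ff_le x hx.2) (by norm_num)⟩
  · exact Stmt10Aux.ff_mono.monotoneOn _
  · exact Stmt10Aux.ff_continuous.continuousOn
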